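/- Let p ≥ 0 be an integer, let n* > 0 with n* ≠ 1, let ε > 0, and let κ : (n*−ε, n*+ε) → ℂ be a continuous ITE trajectory, i.e. F_p(κ(n), n) = 0 for all n. Suppose Im κ(n) ≠ 0 for every n ≠ n*, while κ(n*) ∈ ℝ and κ(n*) ≠ 0. Then J_p(κ(n*)) = 0 and J_p(√n*·κ(n*)) = 0; in particular κ(n*) and √n*·κ(n*) are square roots of Dirichlet eigenvalues of the negative Laplacian on the unit disk. -/

import Mathlib

open Complex Real Filter Set

/-- Bessel function of the first kind of integer order `p`. -/
noncomputable def besselJ (p : ℕ) (z : ℂ) : ℂ :=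
  ∑' m : ℕ, ((-1 : ℂ) ^ m / ((Nat.factorial m : ℂ) * (Nat.factorial (m + p) : ℂ)))
    * (z / 2) ^ (2 * m + p)

/-- Derivative of the Bessel function. -/
noncomputable def besselJ' (p : ℕ) (z : ℂ) : ℂ := deriv (besselJ p) z

/-- The ITE determinant function `F_p(κ, n)`. -/
noncomputable def Fp (p : ℕ) (κ : ℂ) (n : ℝ) : ℂ :=
  κ * (besselJ' p κ * besselJ p ((Real.sqrt n : ℂ) * κ)
    - (Real.sqrt n : ℂ) * besselJ p κ * besselJ' p ((Real.sqrt n : ℂ) * κ))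

/-!
Write `J = J_p`, `s = √n*` and `t = κ(n*)`, a nonzero real number. By Bessel's equation the energy
`(x J'(x))² + (x² - p²) J(x)²` has derivative `2 x J(x)²`; it vanishes at `0` and at any common
zero of `J` and `J'`, yet increases strictly near `0`, so `J` and `J'` have no common nonzero real
zero. Hence `F_p(t, n*) = t (J'(t) J(st) - s J(t) J'(st)) = 0` forces `J(t)` and `J(st)` to vanish
together. If neither vanished, Bessel's equation would give
`∂_κ F_p(t, n*) = (n* - 1) t J(t) J(st) ≠ 0`, so the root of `F_p(·, n)` near `t` would be unique
for `n` near `n*`. As `F_p` commutes with complex conjugation, `κ(n)` and its conjugate are both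
such roots, making `κ(n)` real for `n` near `n*`.
-/

open Topology ComplexConjugate
open scoped Nat

theorem HasStrictFDerivAt.eventually_eq_of_fst_eq_of_map_eq {𝕜 E F G : Type*}
    [NontriviallyNormedField 𝕜] [NormedAddCommGroup E] [NormedSpace 𝕜 E]
    [NormedAddCommGroup F] [NormedSpace 𝕜 F] [NormedAddCommGroup G] [NormedSpace 𝕜 G]
    {Φ : E × F → G} {L : E × F →L[𝕜] G} {x : E × F} (hΦ : HasStrictFDerivAt Φ L x)
    {L₂ : F →L[𝕜] G} (h₂ : HasFDerivAt (fun y => Φ (x.1, y)) L₂ x.2)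
    {C : ℝ} (hC : 0 < C) (hL₂ : ∀ v, ‖v‖ ≤ C * ‖L₂ v‖) :
    ∀ᶠ q in 𝓝 (x, x), q.1.1 = q.2.1 → Φ q.1 = Φ q.2 → q.1 = q.2 := by
  have hL : L.comp (ContinuousLinearMap.inr 𝕜 E F) = L₂ :=
    (hΦ.hasFDerivAt.comp x.2 (hasFDerivAt_prodMk_right x.1 x.2)).unique h₂
  filter_upwards [(hasStrictFDerivAt_iff_isLittleO.1 hΦ).def (inv_pos.2 (mul_pos two_pos hC))]
    with q hq hfst hΦq
  set v := q.1.2 - q.2.2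
  have hdiff : q.1 - q.2 = (0, v) := Prod.ext (sub_eq_zero.2 hfst) rfl
  have hv : ‖L₂ v‖ ≤ (2 * C)⁻¹ * ‖v‖ := by
    simpa [hΦq, hdiff, ← hL] using hq
  have hv2 : ‖v‖ ≤ ‖v‖ / 2 :=
    calc ‖v‖ ≤ C * ‖L₂ v‖ := hL₂ v
      _ ≤ C * ((2 * C)⁻¹ * ‖v‖) := by gcongr
      _ = ‖v‖ / 2 := by field_simp
  exact Prod.ext hfst (sub_eq_zero.1 (norm_le_zero_iff.1 (by linarith)))

theorem lt_of_hasDerivAt_of_nonneg_of_pos {f f' : ℝ → ℝ} {a b c : ℝ} (hab : a < b) (hbc : b ≤ c)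
    (hf : ContinuousOn f (Icc a c)) (hderiv : ∀ x ∈ Ioo a c, HasDerivAt f (f' x) x)
    (hnonneg : ∀ x ∈ Ioo a c, 0 ≤ f' x) (hpos : ∀ x ∈ Ioo a b, 0 < f' x) : f a < f c := by
  have hsub : Icc a b ⊆ Icc a c := Icc_subset_Icc_right hbc
  have hstrict : StrictMonoOn f (Icc a b) := by
    refine strictMonoOn_of_deriv_pos (convex_Icc a b) (hf.mono hsub) fun x hx => ?_
    rw [interior_Icc] at hx
    rw [(hderiv x ⟨hx.1, hx.2.trans_le hbc⟩).deriv]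
    exact hpos x hx
  have hmono : MonotoneOn f (Icc a c) := by
    refine monotoneOn_of_deriv_nonneg (convex_Icc a c) hf (fun x hx => ?_) (fun x hx => ?_) <;>
      rw [interior_Icc] at hx
    · exact (hderiv x hx).differentiableAt.differentiableWithinAt
    · rw [(hderiv x hx).deriv]
      exact hnonneg x hx
  calc f a < f b := hstrict (left_mem_Icc.2 hab.le) (right_mem_Icc.2 hab.le) hab
    _ ≤ f c := hmono (hsub (right_mem_Icc.2 hab.le)) (right_mem_Icc.2 (hab.le.trans hbc)) hbc

section MonomialSeries

variable {ι : Type*} {b : ι → ℂ} {e : ι → ℕ}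

noncomputable def monomialSeries (b : ι → ℂ) (e : ι → ℕ) (z : ℂ) : ℂ := ∑' i, b i * z ^ e i

def IsEntireMonomialSeries (b : ι → ℂ) (e : ι → ℕ) : Prop :=
  ∀ R : ℝ, 0 ≤ R → Summable fun i => ‖b i‖ * R ^ e i

lemma norm_mul_pow_le_of_mem_ball {R : ℝ} {w : ℂ} (hw : w ∈ Metric.ball 0 R) (i : ι) :
    ‖b i * w ^ e i‖ ≤ ‖b i‖ * R ^ e i := by
  rw [norm_mul, norm_pow]
  gcongr
  exact (mem_ball_zero_iff.1 hw).le

namespace IsEntireMonomialSeries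

lemma summable (h : IsEntireMonomialSeries b e) (z : ℂ) : Summable fun i => b i * z ^ e i :=
  .of_norm <| (h ‖z‖ (norm_nonneg z)).congr fun i => by rw [norm_mul, norm_pow]

lemma differentiable (h : IsEntireMonomialSeries b e) :
    Differentiable ℂ (monomialSeries b e) := by
  intro z
  have hz : z ∈ Metric.ball (0 : ℂ) (‖z‖ + 1) := by simp
  refine (Complex.differentiableOn_tsum_of_summable_norm (h (‖z‖ + 1) (by positivity))
    (fun i => (by fun_prop : Differentiable ℂ fun w : ℂ => b i * w ^ e i).differentiableOn)
    Metric.isOpen_ball (fun i w hw => norm_mul_pow_le_of_mem_ball hw i)).differentiableAt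
    (Metric.isOpen_ball.mem_nhds hz)

lemma mul_deriv (h : IsEntireMonomialSeries b e) (z : ℂ) :
    z * deriv (monomialSeries b e) z = monomialSeries (fun i => b i * e i) e z := by
  have hz : z ∈ Metric.ball (0 : ℂ) (‖z‖ + 1) := by simp
  have hs := Complex.hasSum_deriv_of_summable_norm (h (‖z‖ + 1) (by positivity))
    (fun i => (by fun_prop : Differentiable ℂ fun w : ℂ => b i * w ^ e i).differentiableOn)
    Metric.isOpen_ball (fun i w hw => norm_mul_pow_le_of_mem_ball hw i) hz
  refine ((hs.mul_left z).congr_fun fun i => ?_).tsum_eq.symm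
  rw [((hasDerivAt_pow (e i) z).const_mul (b i)).deriv]
  rcases eq_or_ne (e i) 0 with hi | hi
  · simp [hi]
  · rw [← mul_pow_sub_one hi z]
    ring

lemma mul_exponent (h : IsEntireMonomialSeries b e) :
    IsEntireMonomialSeries (fun i => b i * e i) e := by
  intro R hR
  refine (h (2 * R) (by positivity)).of_nonneg_of_le (fun i => by positivity) fun i => ?_
  have hei : (e i : ℝ) ≤ 2 ^ e i := by exact_mod_cast (e i).lt_two_pow_self.le
  rw [norm_mul, Complex.norm_natCast, mul_pow, mul_assoc]
  gcongr

end IsEntireMonomialSeries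

lemma monomialSeries_conj (hb : ∀ i, conj (b i) = b i) (z : ℂ) :
    monomialSeries b e (conj z) = conj (monomialSeries b e z) := by
  simp only [monomialSeries, Complex.conj_tsum, map_mul, map_pow, hb]

end MonomialSeries

section Bessel

variable (p : ℕ)

noncomputable def besselCoeff (m : ℕ) : ℂ :=
  (-1) ^ m / ((m ! : ℂ) * ((m + p)! : ℂ) * 2 ^ (2 * m + p))

lemma besselJ_eq_monomialSeries :
    besselJ p = monomialSeries (besselCoeff p) (fun m => 2 * m + p) := by
  funext z
  refine tsum_congr fun m => ?_
  rw [besselCoeff, div_pow]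
  ring

lemma norm_besselCoeff_le (m : ℕ) : ‖besselCoeff p m‖ ≤ (m ! : ℝ)⁻¹ := by
  have h1 : (1 : ℝ) ≤ (m + p)! := by exact_mod_cast (m + p).factorial_pos
  have h2 : (1 : ℝ) ≤ 2 ^ (2 * m + p) := one_le_pow₀ one_le_two
  rw [besselCoeff, norm_div, norm_pow, norm_neg, norm_one, one_pow, norm_mul, norm_mul, norm_pow,
    Complex.norm_natCast, Complex.norm_natCast, Complex.norm_two, ← one_div]
  gcongr
  calc (m ! : ℝ) = m ! * 1 * 1 := by ring
    _ ≤ m ! * (m + p)! * 2 ^ (2 * m + p) := by gcongr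

lemma isEntireMonomialSeries_besselCoeff (q : ℕ) :
    IsEntireMonomialSeries (besselCoeff p) (fun m => 2 * m + q) := by
  intro R hR
  refine ((Real.summable_pow_div_factorial (R ^ 2)).mul_left (R ^ q)).of_nonneg_of_le
    (fun m => by positivity) fun m => ?_
  calc ‖besselCoeff p m‖ * R ^ (2 * m + q) ≤ (m ! : ℝ)⁻¹ * R ^ (2 * m + q) := by
        gcongr; exact norm_besselCoeff_le p m
    _ = R ^ q * ((R ^ 2) ^ m / m !) := by rw [pow_add, pow_mul]; ring

lemma differentiable_besselJ : Differentiable ℂ (besselJ p) :=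
  besselJ_eq_monomialSeries p ▸ (isEntireMonomialSeries_besselCoeff p p).differentiable

lemma differentiable_besselJ' : Differentiable ℂ (besselJ' p) :=
  (differentiable_besselJ p).deriv

lemma besselCoeff_succ_mul (m : ℕ) :
    besselCoeff p (m + 1) * (4 * (m + 1) * (m + 1 + p)) = -besselCoeff p m := by
  have hm : (m ! : ℂ) ≠ 0 := Nat.cast_ne_zero.2 m.factorial_ne_zero
  have hmp : ((m + p)! : ℂ) ≠ 0 := Nat.cast_ne_zero.2 (m + p).factorial_ne_zero
  have hmp1 : ((m + p : ℕ) : ℂ) + 1 ≠ 0 := Nat.cast_add_one_ne_zero (m + p)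
  rw [besselCoeff, besselCoeff, show m + 1 + p = (m + p) + 1 by ring, Nat.factorial_succ,
    Nat.factorial_succ, show 2 * (m + 1) + p = (2 * m + p) + 2 by ring, pow_add]
  push_cast at hmp1 ⊢
  field_simp
  ring

lemma hasSum_besselCoeff_mul_sq (z : ℂ) :
    HasSum (fun m => besselCoeff p m * ((2 * m + p : ℕ) : ℂ) ^ 2 * z ^ (2 * m + p))
      ((p ^ 2 - z ^ 2) * besselJ p z) := by
  have hsum := (isEntireMonomialSeries_besselCoeff p p).summable z
  have hJz : ∑' m, besselCoeff p m * z ^ (2 * m + p) = besselJ p z := by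
    rw [besselJ_eq_monomialSeries]; rfl
  -- the recursion for the coefficients shifts the series by two powers of `z`
  have hshift : HasSum (fun m => besselCoeff p m * (((2 * m + p : ℕ) : ℂ) ^ 2 - p ^ 2) *
      z ^ (2 * m + p)) (-z ^ 2 * besselJ p z) := by
    rw [← hasSum_nat_add_iff' 1, Finset.sum_range_one]
    simp only [mul_zero, zero_add, sub_self, zero_mul, sub_zero, ← hJz]
    refine (hsum.hasSum.mul_left (-z ^ 2)).congr_fun fun m => ?_
    rw [show 2 * (m + 1) + p = 2 + (2 * m + p) by ring, pow_add]
    push_cast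
    linear_combination z ^ 2 * z ^ (2 * m + p) * besselCoeff_succ_mul p m
  have h := hshift.add (hsum.hasSum.mul_left ((p : ℂ) ^ 2))
  rw [hJz, ← add_mul, neg_add_eq_sub] at h
  exact h.congr_fun fun m => by ring

theorem besselJ_ode (z : ℂ) :
    z ^ 2 * deriv (besselJ' p) z + z * besselJ' p z + (z ^ 2 - p ^ 2) * besselJ p z = 0 := by
  -- `θ = z d/dz` multiplies the coefficient of `z ^ k` by `k`
  set e : ℕ → ℕ := fun m => 2 * m + p
  have hb : IsEntireMonomialSeries (besselCoeff p) e := isEntireMonomialSeries_besselCoeff p p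
  have hθJ : (fun w => w * besselJ' p w) = monomialSeries (fun m => besselCoeff p m * e m) e := by
    funext w
    rw [← hb.mul_deriv, ← besselJ_eq_monomialSeries, besselJ']
  have hd : HasDerivAt (fun w => w * besselJ' p w)
      (1 * besselJ' p z + z * deriv (besselJ' p) z) z :=
    (hasDerivAt_id' z).mul (differentiable_besselJ' p z).hasDerivAt
  have hθθJ : z * (besselJ' p z + z * deriv (besselJ' p) z) =
      monomialSeries (fun m => besselCoeff p m * e m * e m) e z := by
    rw [← hb.mul_exponent.mul_deriv, ← hθJ, hd.deriv, one_mul]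
  have hsq : monomialSeries (fun m => besselCoeff p m * e m * e m) e z =
      (p ^ 2 - z ^ 2) * besselJ p z :=
    ((hasSum_besselCoeff_mul_sq p z).congr_fun fun m => by ring).tsum_eq
  linear_combination hθθJ + hsq

end Bessel

section BesselZeros

variable (p : ℕ)

lemma besselJ_conj (z : ℂ) : besselJ p (conj z) = conj (besselJ p z) := by
  rw [besselJ_eq_monomialSeries]
  exact monomialSeries_conj (fun m => by simp [besselCoeff, map_div₀, map_ofNat]) z

lemma besselJ'_conj (z : ℂ) : besselJ' p (conj z) = conj (besselJ' p z) := by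
  have h : conj ∘ besselJ p ∘ conj = besselJ p := funext fun w => by simp [besselJ_conj]
  show deriv (besselJ p) (conj z) = conj (deriv (besselJ p) z)
  simpa [h] using congrFun (deriv_conj_conj (f := besselJ p)) (conj z)

lemma besselJ_ofReal (x : ℝ) : besselJ p x = (besselJ p x).re :=
  (Complex.conj_eq_iff_re.1 (by rw [← besselJ_conj, Complex.conj_ofReal])).symm

lemma besselJ_eq_pow_mul (z : ℂ) :
    besselJ p z = z ^ p * monomialSeries (besselCoeff p) (fun m => 2 * m) z := by
  rw [besselJ_eq_monomialSeries, monomialSeries, monomialSeries, ← tsum_mul_left]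
  exact tsum_congr fun m => by ring

lemma besselJ_zero_of_ne_zero (hp : p ≠ 0) : besselJ p 0 = 0 := by
  rw [besselJ_eq_pow_mul, zero_pow hp, zero_mul]

lemma eventually_besselJ_ne_zero : ∀ᶠ z in 𝓝[≠] 0, besselJ p z ≠ 0 := by
  set G := monomialSeries (besselCoeff p) (fun m => 2 * m)
  have hG : Continuous G := (isEntireMonomialSeries_besselCoeff p 0).differentiable.continuous
  have hG0 : G 0 ≠ 0 := by
    rw [show G 0 = besselCoeff p 0 from
      (tsum_eq_single 0 fun m hm => by simp [hm]).trans (by simp)]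
    simp [besselCoeff, Nat.factorial_ne_zero]
  filter_upwards [nhdsWithin_le_nhds (hG.continuousAt.eventually_ne hG0), self_mem_nhdsWithin]
    with z hGz hz
  rw [besselJ_eq_pow_mul]
  exact mul_ne_zero (pow_ne_zero p hz) hGz

lemma eventually_besselJ_mul_ne_zero {t : ℝ} (ht : t ≠ 0) :
    ∀ᶠ s : ℝ in 𝓝[>] 0, besselJ p (s * t) ≠ 0 := by
  have hlim : Tendsto (fun s : ℝ => (s : ℂ) * t) (𝓝[>] 0) (𝓝[≠] 0) := by
    refine tendsto_nhdsWithin_of_tendsto_nhds_of_eventually_within _ ?_ ?_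
    · exact ((by fun_prop : Continuous fun s : ℝ => (s : ℂ) * t).tendsto' 0 0
        (by simp)).mono_left nhdsWithin_le_nhds
    · filter_upwards [self_mem_nhdsWithin] with s hs
      exact mul_ne_zero (by exact_mod_cast (mem_Ioi.1 hs).ne') (by exact_mod_cast ht)
  exact hlim.eventually (eventually_besselJ_ne_zero p)

noncomputable def besselEnergy (z : ℂ) : ℂ :=
  (z * besselJ' p z) ^ 2 + (z ^ 2 - p ^ 2) * besselJ p z ^ 2

lemma continuous_besselEnergy : Continuous (besselEnergy p) := by
  have := (differentiable_besselJ p).continuous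
  have := (differentiable_besselJ' p).continuous
  unfold besselEnergy
  fun_prop

lemma hasDerivAt_besselEnergy {z : ℂ} (hz : z ≠ 0) :
    HasDerivAt (besselEnergy p) (2 * z * besselJ p z ^ 2) z := by
  have hJ : HasDerivAt (besselJ p) (besselJ' p z) z := (differentiable_besselJ p z).hasDerivAt
  have hJ' := (differentiable_besselJ' p z).hasDerivAt
  refine ((((hasDerivAt_id' z).mul hJ').pow 2).add
    ((((hasDerivAt_id' z).pow 2).sub_const _).mul (hJ.pow 2))).congr_deriv ?_
  apply mul_left_cancel₀ hz
  simp only [Pi.mul_apply, Pi.pow_apply]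
  push_cast
  linear_combination (2 * z * besselJ' p z) * besselJ_ode p z

lemma hasDerivAt_besselEnergy_mul_re {t s : ℝ} (ht : t ≠ 0) (hs : s ≠ 0) :
    HasDerivAt (fun r : ℝ => (besselEnergy p (r * t)).re)
      (2 * s * t ^ 2 * ‖besselJ p (s * t)‖ ^ 2) s := by
  have hst : (s : ℂ) * t ≠ 0 := mul_ne_zero (by exact_mod_cast hs) (by exact_mod_cast ht)
  refine ((hasDerivAt_besselEnergy p hst).comp (s : ℂ)
    ((hasDerivAt_id' (s : ℂ)).mul_const (t : ℂ))).real_of_complex.congr_deriv ?_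
  rw [show (s : ℂ) * t = ((s * t : ℝ) : ℂ) by push_cast; rfl, besselJ_ofReal p (s * t),
    Complex.norm_real, Real.norm_eq_abs, sq_abs]
  norm_cast
  ring

theorem besselJ_ne_zero_or_besselJ'_ne_zero {t : ℝ} (ht : t ≠ 0) :
    besselJ p t ≠ 0 ∨ besselJ' p t ≠ 0 := by
  by_contra! h
  -- Walking along `s ↦ s * t`, `s ∈ [0, 1]`, handles both signs of `t` at once.
  set V : ℝ → ℝ := fun s => (besselEnergy p (s * t)).re
  have hV0 : V 0 = 0 := by
    rcases eq_or_ne p 0 with hp | hp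
    · simp [V, besselEnergy, hp]
    · simp [V, besselEnergy, besselJ_zero_of_ne_zero p hp]
  have hV1 : V 1 = 0 := by simp [V, besselEnergy, h.1, h.2]
  obtain ⟨u, hu, hJne⟩ :=
    mem_nhdsGT_iff_exists_Ioo_subset.1 (eventually_besselJ_mul_ne_zero p ht)
  have hV01 : V 0 < V 1 :=
    lt_of_hasDerivAt_of_nonneg_of_pos (lt_min hu one_pos) (min_le_right u 1)
      (Complex.continuous_re.comp ((continuous_besselEnergy p).comp (by fun_prop))).continuousOn
      (fun s hs => hasDerivAt_besselEnergy_mul_re p ht hs.1.ne')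
      (fun s hs => by have := hs.1.le; positivity)
      (fun s hs => by
        have := norm_pos_iff.2 (hJne ⟨hs.1, hs.2.trans_le (min_le_left u 1)⟩)
        have := hs.1
        positivity)
  linarith

end BesselZeros

section InteriorTransmission

variable (p : ℕ)

lemma Fp_conj (w : ℂ) (n : ℝ) : Fp p (conj w) n = conj (Fp p w n) := by
  simp only [Fp, map_mul, map_sub, Complex.conj_ofReal, ← besselJ_conj, ← besselJ'_conj]

lemma hasDerivAt_Fp {n : ℝ} (hn : 0 ≤ n) {w : ℂ} (hw : w ≠ 0) :
    HasDerivAt (fun κ => Fp p κ n)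
      ((n - 1) * w * besselJ p w * besselJ p ((√n : ℝ) * w)) w := by
  set s : ℂ := ((√n : ℝ) : ℂ)
  have hs : s ^ 2 = n := by simp only [s]; norm_cast; exact Real.sq_sqrt hn
  have hJ : ∀ z, HasDerivAt (besselJ p) (besselJ' p z) z :=
    fun z => (differentiable_besselJ p z).hasDerivAt
  have hJ' : ∀ z, HasDerivAt (besselJ' p) (deriv (besselJ' p) z) z :=
    fun z => (differentiable_besselJ' p z).hasDerivAt
  have hJs := (hJ (s * w)).comp w ((hasDerivAt_id' w).const_mul s)
  have hJ's := (hJ' (s * w)).comp w ((hasDerivAt_id' w).const_mul s)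
  refine ((hasDerivAt_id' w).mul (((hJ' w).mul hJs).sub
    (((hJ w).const_mul s).mul hJ's))).congr_deriv ?_
  apply mul_left_cancel₀ hw
  simp only [Pi.mul_apply, Pi.sub_apply, Function.comp_apply]
  linear_combination besselJ p (s * w) * besselJ_ode p w
    - besselJ p w * besselJ_ode p (s * w) + w ^ 2 * besselJ p w * besselJ p (s * w) * hs

lemma contDiffAt_Fp {n : ℝ} (hn : 0 < n) (w : ℂ) :
    ContDiffAt ℝ 1 (fun q : ℝ × ℂ => Fp p q.2 q.1) (n, w) := by
  have hJ : ContDiff ℝ 1 (besselJ p) := (differentiable_besselJ p).contDiff.restrict_scalars ℝ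
  have hJ' : ContDiff ℝ 1 (besselJ' p) := (differentiable_besselJ' p).contDiff.restrict_scalars ℝ
  have hs : ContDiffAt ℝ 1 (fun q : ℝ × ℂ => ((√q.1 : ℝ) : ℂ)) (n, w) :=
    Complex.ofRealCLM.contDiff.contDiffAt.comp _
      ((Real.contDiffAt_sqrt hn.ne').comp _ contDiffAt_fst)
  unfold Fp
  fun_prop

lemma besselJ_eq_zero_iff_of_Fp_eq_zero {n : ℝ} (hn : 0 < n) {t : ℝ} (ht : t ≠ 0)
    (hF : Fp p t n = 0) : besselJ p t = 0 ↔ besselJ p ((√n : ℝ) * t) = 0 := by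
  have hst : ((√n : ℝ) : ℂ) * t = ((√n * t : ℝ) : ℂ) := by push_cast; rfl
  have hs : ((√n : ℝ) : ℂ) ≠ 0 := by exact_mod_cast (Real.sqrt_pos.2 hn).ne'
  unfold Fp at hF
  replace hF := sub_eq_zero.1 ((mul_eq_zero.1 hF).resolve_left (by exact_mod_cast ht))
  constructor
  · intro h
    rw [h, mul_zero, zero_mul, mul_eq_zero] at hF
    exact hF.resolve_left
      ((besselJ_ne_zero_or_besselJ'_ne_zero p ht).resolve_left (not_not.2 h))
  · intro h
    rw [h, mul_zero, eq_comm, mul_eq_zero, mul_eq_zero, hst] at hF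
    rw [hst] at h
    exact (hF.resolve_right ((besselJ_ne_zero_or_besselJ'_ne_zero p
      (mul_ne_zero (Real.sqrt_pos.2 hn).ne' ht)).resolve_left (not_not.2 h))).resolve_left hs

lemma eventually_eq_of_Fp_eq_zero {n₀ : ℝ} (hn₀ : 0 < n₀) (hn₀1 : n₀ ≠ 1) {w₀ : ℂ}
    (hw₀ : w₀ ≠ 0) (hJ : besselJ p w₀ ≠ 0) (hJs : besselJ p ((√n₀ : ℝ) * w₀) ≠ 0) :
    ∀ᶠ q in 𝓝 ((n₀, w₀), (n₀, w₀)),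
      q.1.1 = q.2.1 → Fp p q.1.2 q.1.1 = 0 → Fp p q.2.2 q.2.1 = 0 → q.1 = q.2 := by
  set B : ℂ := (n₀ - 1) * w₀ * besselJ p w₀ * besselJ p ((√n₀ : ℝ) * w₀)
  have hB : B ≠ 0 := mul_ne_zero (mul_ne_zero (mul_ne_zero
    (sub_ne_zero.2 (by exact_mod_cast hn₀1)) hw₀) hJ) hJs
  have hbound : ∀ v : ℂ, ‖v‖ ≤ ‖B‖⁻¹ * ‖v • B‖ := fun v => by
    rw [norm_smul, mul_comm, mul_inv_cancel_right₀ (norm_ne_zero_iff.2 hB)]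
  have hΦ := (contDiffAt_Fp p hn₀ w₀).hasStrictFDerivAt one_ne_zero
  filter_upwards [hΦ.eventually_eq_of_fst_eq_of_map_eq
    ((hasDerivAt_Fp p hn₀.le hw₀).hasFDerivAt.restrictScalars ℝ)
    (inv_pos.2 (norm_pos_iff.2 hB)) hbound] with q hq hfst h₁ h₂
  exact hq hfst (h₁.trans h₂.symm)

end InteriorTransmission

/-- complex-valued ITE trajectories intersect the real axis only at IDEs. -/
theorem stmt_2 (p : ℕ) (nst : ℝ) (hnst : 0 < nst) (hnst1 : nst ≠ 1) (ε : ℝ) (hε : 0 < ε)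
    (κ : ℝ → ℂ) (hcont : ContinuousOn κ (Set.Ioo (nst - ε) (nst + ε)))
    (hF : ∀ n ∈ Set.Ioo (nst - ε) (nst + ε), Fp p (κ n) n = 0)
    (him : ∀ n ∈ Set.Ioo (nst - ε) (nst + ε), n ≠ nst → (κ n).im ≠ 0)
    (hreal : (κ nst).im = 0) (hne : κ nst ≠ 0) :
    besselJ p (κ nst) = 0 ∧ besselJ p ((Real.sqrt nst : ℂ) * κ nst) = 0 := by
  have hnbhd : Ioo (nst - ε) (nst + ε) ∈ 𝓝 nst := Ioo_mem_nhds (by linarith) (by linarith)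
  obtain ⟨t, ht⟩ : ∃ t : ℝ, (t : ℂ) = κ nst := ⟨(κ nst).re, Complex.ext rfl hreal.symm⟩
  have ht0 : t ≠ 0 := by rintro rfl; exact hne (by simp [← ht])
  have hiff :=
    besselJ_eq_zero_iff_of_Fp_eq_zero p hnst ht0 (ht ▸ hF nst (mem_of_mem_nhds hnbhd))
  rw [← ht]
  by_contra hcon
  have hJ : besselJ p t ≠ 0 := fun h => hcon ⟨h, hiff.1 h⟩
  have hJs : besselJ p ((√nst : ℝ) * t) ≠ 0 := fun h => hJ (hiff.2 h)
  -- `κ` and its complex conjugate are trajectories through the same simple root `t`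
  have hκ : ContinuousAt κ nst := hcont.continuousAt hnbhd
  have hlim : Tendsto (fun n => ((n, κ n), (n, conj (κ n)))) (𝓝 nst)
      (𝓝 ((nst, κ nst), (nst, conj (κ nst)))) :=
    (continuousAt_id.prodMk hκ).prodMk
      (continuousAt_id.prodMk (Complex.continuous_conj.continuousAt.comp hκ))
  rw [← ht, Complex.conj_ofReal] at hlim
  obtain ⟨n, ⟨hq, hn⟩, hn'⟩ := ((((hlim.eventually (eventually_eq_of_Fp_eq_zero p hnst hnst1
    (by exact_mod_cast ht0) hJ hJs)).and hnbhd).filter_mono nhdsWithin_le_nhds).and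
    (self_mem_nhdsWithin (s := {nst}ᶜ))).exists
  have hκn := hq rfl (hF n hn) (by rw [Fp_conj, hF n hn, map_zero])
  exact him n hn hn' (Complex.conj_eq_iff_im.1 (congrArg Prod.snd hκn).symm)
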